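/- arXiv:2207.01249 — 2 statements merged into one kernel-verified Lean document; each statement's English description precedes it below -/
import Mathlib

section
/- If K_s is positive semidefinite, then along trajectories of the closed-loop system the Lyapunov function is nonincreasing: for differentiable e, θ̂ : ℝ → ℝ^m satisfying e'(t) = −J(θ) · K_s · J(θ̂(t))ᵀ · e(t) and θ̂'(t) = −Γ⁻¹ · Y(e(t), θ̂(t))ᵀ · e(t), the function V(t) := (1/2)‖e(t)‖² + (Γ/2)‖θ̂(t) − θ‖² satisfies V'(t) ≤ 0 for all t, and hence V(t) ≤ V(s) whenever s ≤ t. -/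
open Matrix Filter Topology

/-- Deformation Jacobian `J(θ) = diag(θ) · C`. -/
noncomputable def defJac {m k : ℕ} (C : Matrix (Fin m) (Fin (3*k)) ℝ) (θ : Fin m → ℝ) :
    Matrix (Fin m) (Fin (3*k)) ℝ :=
  Matrix.diagonal θ * C

/-- Regression matrix `Y(e, θ̂) = diag((C Kₛ Cᵀ diag(θ̂)) ·ᵥ e)`. -/
noncomputable def regY {m k : ℕ} (C : Matrix (Fin m) (Fin (3*k)) ℝ)
    (Ks : Matrix (Fin (3*k)) (Fin (3*k)) ℝ) (e θh : Fin m → ℝ) :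
    Matrix (Fin m) (Fin m) ℝ :=
  Matrix.diagonal ((C * Ks * Cᵀ * Matrix.diagonal θh) *ᵥ e)

/-! With `w = Kₛ J(θ̂)ᵀ e`, the error dynamics contribute `-⟪J(θ)ᵀ e, w⟫` to `V'` and the
adaptation law contributes `⟪J(θ̂)ᵀ e - J(θ)ᵀ e, w⟫` (the gain `Γ` cancels), because
`J(a)ᵀ b = J(b)ᵀ a` and `J` is linear. The unknown `θ` therefore drops out and
`V' = -zᵀ Kₛ z` with `z = J(θ̂)ᵀ e`, which is `≤ 0` as `Kₛ` is positive semidefinite;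
monotonicity of `V` then follows from the mean value theorem. -/

section

variable {m k : ℕ} (C : Matrix (Fin m) (Fin (3*k)) ℝ) (Ks : Matrix (Fin (3*k)) (Fin (3*k)) ℝ)

lemma Matrix.diagonal_mulVec_comm {n α : Type*} [Fintype n] [DecidableEq n] [CommSemiring α]
    (a b : n → α) : diagonal a *ᵥ b = diagonal b *ᵥ a := by
  ext i
  simp only [mulVec_diagonal, mul_comm]

lemma defJac_sub (a b : Fin m → ℝ) : defJac C (a - b) = defJac C a - defJac C b := by
  rw [defJac, defJac, defJac, ← Matrix.sub_mul, diagonal_sub]; rfl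

lemma defJac_transpose_mulVec_comm (a b : Fin m → ℝ) :
    (defJac C a)ᵀ *ᵥ b = (defJac C b)ᵀ *ᵥ a := by
  simp only [defJac, transpose_mul, diagonal_transpose, ← mulVec_mulVec, diagonal_mulVec_comm a b]

lemma regY_transpose_mulVec (e θh : Fin m → ℝ) :
    (regY C Ks e θh)ᵀ *ᵥ e = defJac C e *ᵥ (Ks *ᵥ ((defJac C θh)ᵀ *ᵥ e)) := by
  simp only [regY, defJac, diagonal_transpose, transpose_mul, ← mulVec_mulVec,
    diagonal_mulVec_comm _ e]

lemma dotProduct_closedLoop_add_dotProduct_regY (e θ θh : Fin m → ℝ) :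
    e ⬝ᵥ ((defJac C θ * Ks * (defJac C θh)ᵀ) *ᵥ e) + (θh - θ) ⬝ᵥ ((regY C Ks e θh)ᵀ *ᵥ e)
      = (defJac C θh)ᵀ *ᵥ e ⬝ᵥ Ks *ᵥ ((defJac C θh)ᵀ *ᵥ e) := by
  set w := Ks *ᵥ ((defJac C θh)ᵀ *ᵥ e)
  have h_plant : e ⬝ᵥ ((defJac C θ * Ks * (defJac C θh)ᵀ) *ᵥ e) = (defJac C θ)ᵀ *ᵥ e ⬝ᵥ w := by
    rw [← mulVec_mulVec, ← mulVec_mulVec, dotProduct_mulVec, ← mulVec_transpose]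
  have h_update : (θh - θ) ⬝ᵥ ((regY C Ks e θh)ᵀ *ᵥ e)
      = ((defJac C θh)ᵀ *ᵥ e - (defJac C θ)ᵀ *ᵥ e) ⬝ᵥ w := by
    rw [regY_transpose_mulVec, dotProduct_mulVec, ← mulVec_transpose,
      defJac_transpose_mulVec_comm, defJac_sub, transpose_sub, sub_mulVec]
  rw [h_plant, h_update, sub_dotProduct, add_sub_cancel]

end

theorem lyapunov_nonincreasing_general
    (m k : ℕ)
    (C : Matrix (Fin m) (Fin (3*k)) ℝ)
    (Ks : Matrix (Fin (3*k)) (Fin (3*k)) ℝ) (hKs : Ks.PosSemidef)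
    (Γ : ℝ) (hΓ : 0 < Γ)
    (θ : EuclideanSpace ℝ (Fin m))
    (e θh : ℝ → EuclideanSpace ℝ (Fin m))
    (hdyn : ∀ t : ℝ,
      HasDerivAt e (WithLp.toLp 2 (-((defJac C θ * Ks * (defJac C (θh t))ᵀ) *ᵥ e t))) t)
    (hupd : ∀ t : ℝ,
      HasDerivAt θh (WithLp.toLp 2 (-(Γ⁻¹ • ((regY C Ks (e t) (θh t))ᵀ *ᵥ e t)))) t)
    (V : ℝ → ℝ)
    (hV : V = fun t => (1/2) * ‖e t‖^2 + (Γ/2) * ‖θh t - θ‖^2) :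
    (∀ t : ℝ, deriv V t ≤ 0) ∧ ∀ s t : ℝ, s ≤ t → V t ≤ V s := by
  set z : ℝ → Fin (3*k) → ℝ := fun t => (defJac C (θh t))ᵀ *ᵥ e t
  have hV' (t : ℝ) : HasDerivAt V (-(z t ⬝ᵥ Ks *ᵥ z t)) t := by
    subst hV
    refine (((hdyn t).norm_sq.const_mul (1/2)).add
      (((hupd t).sub_const θ).norm_sq.const_mul (Γ/2))).congr_deriv ?_
    have key := dotProduct_closedLoop_add_dotProduct_regY C Ks (e t) θ (θh t)
    rw [← WithLp.ofLp_sub] at key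
    simp only [EuclideanSpace.inner_eq_star_dotProduct, star_trivial,
      neg_dotProduct, smul_dotProduct, smul_eq_mul]
    rw [dotProduct_comm _ (e t).ofLp, dotProduct_comm _ (θh t - θ).ofLp]
    field_simp
    linear_combination -key
  have hV'_nonpos (t : ℝ) : deriv V t ≤ 0 := by
    rw [(hV' t).deriv, neg_nonpos]
    exact hKs.dotProduct_mulVec_nonneg (z t)
  exact ⟨hV'_nonpos, fun s t hst =>
    antitone_of_deriv_nonpos (fun t => (hV' t).differentiableAt) hV'_nonpos hst⟩

/-- if `Kₛ` is positive semidefinite, then along closed-loop trajectories the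
Lyapunov function `V(t) = ½‖e(t)‖² + (Γ/2)‖θ̂(t) − θ‖²` satisfies `V'(t) ≤ 0` for all `t`,
and hence `V(t) ≤ V(s)` whenever `s ≤ t`. -/
theorem lyapunov_nonincreasing
    (m k : ℕ) (hm : 0 < m) (hk : 0 < k)
    (C : Matrix (Fin m) (Fin (3*k)) ℝ)
    (Ks : Matrix (Fin (3*k)) (Fin (3*k)) ℝ) (hKs : Ks.PosSemidef)
    (Γ : ℝ) (hΓ : 0 < Γ)
    (θ : EuclideanSpace ℝ (Fin m))
    (e θh : ℝ → EuclideanSpace ℝ (Fin m))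
    (hdyn : ∀ t : ℝ,
      HasDerivAt e (WithLp.toLp 2 (-((defJac C θ * Ks * (defJac C (θh t))ᵀ) *ᵥ e t))) t)
    (hupd : ∀ t : ℝ,
      HasDerivAt θh (WithLp.toLp 2 (-(Γ⁻¹ • ((regY C Ks (e t) (θh t))ᵀ *ᵥ e t)))) t)
    (V : ℝ → ℝ)
    (hV : V = fun t => (1/2) * ‖e t‖^2 + (Γ/2) * ‖θh t - θ‖^2) :
    (∀ t : ℝ, deriv V t ≤ 0) ∧ ∀ s t : ℝ, s ≤ t → V t ≤ V s :=
  lyapunov_nonincreasing_general m k C Ks hKs Γ hΓ θ e θh hdyn hupd V hV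
end

section
/- The accumulated Lyapunov dissipation is bounded by the initial energy: if e, θ̂ : ℝ → ℝ^m are differentiable and satisfy e'(t) = −J(θ) · K_s · J(θ̂(t))ᵀ · e(t) and θ̂'(t) = −Γ⁻¹ · Y(e(t), θ̂(t))ᵀ · e(t) for all t ≥ 0, then for every T ≥ 0 the integral ∫₀ᵀ e(t)ᵀ · J(θ̂(t)) · K_s · J(θ̂(t))ᵀ · e(t) dt equals V(0) − V(T), and in particular (when K_s is positive semidefinite) is at most V(0), where V(t) := (1/2)‖e(t)‖² + (Γ/2)‖θ̂(t) − θ‖². -/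
/-!
Along solutions `V' = ⟪e, e'⟫ + Γ ⟪θ̂ - θ, θ̂'⟫`. Since `J(a) = diag(a) C`, the identity
`eᵀ diag(a) A e = a ⬝ᵥ (diag(A e) e)` turns `⟪e, e'⟫` into `-θ ⬝ᵥ w` with `w = Y(e, θ̂) e`, while the
adaptation law contributes `-(θ̂ - θ) ⬝ᵥ w`: the unknown `θ` cancels and `V' = -eᵀ J(θ̂) Kₛ J(θ̂)ᵀ e`.
The fundamental theorem of calculus gives the identity, and `V T ≥ 0` the bound.
-/

open Matrix Filter Topology

theorem Matrix.dotProduct_diagonal_mul_mulVec {n R : Type*} [Fintype n] [DecidableEq n]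
    [CommSemiring R] (A : Matrix n n R) (a x : n → R) :
    x ⬝ᵥ ((diagonal a * A) *ᵥ x) = a ⬝ᵥ (diagonal (A *ᵥ x) *ᵥ x) := by
  simp only [← mulVec_mulVec, mulVec_diagonal, dotProduct]
  exact Finset.sum_congr rfl fun i _ => by ring

section AdaptiveLaw
variable {m k : ℕ} (C : Matrix (Fin m) (Fin (3*k)) ℝ) (Ks : Matrix (Fin (3*k)) (Fin (3*k)) ℝ)

theorem defJac_mul_mul_transpose (a b : Fin m → ℝ) :
    defJac C a * Ks * (defJac C b)ᵀ = diagonal a * (C * Ks * Cᵀ * diagonal b) := by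
  simp [defJac, transpose_mul, Matrix.mul_assoc]

theorem regY_transpose (x y : Fin m → ℝ) : (regY C Ks x y)ᵀ = regY C Ks x y :=
  diagonal_transpose _

theorem dotProduct_defJac_add_dotProduct_regY (θ x y : Fin m → ℝ) :
    x ⬝ᵥ ((defJac C θ * Ks * (defJac C y)ᵀ) *ᵥ x) + (y - θ) ⬝ᵥ ((regY C Ks x y)ᵀ *ᵥ x) =
      x ⬝ᵥ ((defJac C y * Ks * (defJac C y)ᵀ) *ᵥ x) := by
  rw [regY_transpose, defJac_mul_mul_transpose, defJac_mul_mul_transpose,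
    dotProduct_diagonal_mul_mulVec, dotProduct_diagonal_mul_mulVec, regY, ← add_dotProduct,
    add_sub_cancel]

theorem continuousOn_dissipation {s : Set ℝ} {e θh : ℝ → Fin m → ℝ} (he : ContinuousOn e s)
    (hθh : ContinuousOn θh s) :
    ContinuousOn (fun t => e t ⬝ᵥ ((defJac C (θh t) * Ks * (defJac C (θh t))ᵀ) *ᵥ e t)) s := by
  unfold defJac
  fun_prop

theorem hasDerivAt_lyapunov {Γ : ℝ} (hΓ : Γ ≠ 0) (θ : EuclideanSpace ℝ (Fin m))
    {e θh : ℝ → EuclideanSpace ℝ (Fin m)} {t : ℝ}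
    (he : HasDerivAt e (WithLp.toLp 2 (-((defJac C θ * Ks * (defJac C (θh t))ᵀ) *ᵥ e t))) t)
    (hθh : HasDerivAt θh (WithLp.toLp 2 (-(Γ⁻¹ • ((regY C Ks (e t) (θh t))ᵀ *ᵥ e t)))) t) :
    HasDerivAt (fun s => (1/2) * ‖e s‖^2 + (Γ/2) * ‖θh s - θ‖^2)
      (-(e t ⬝ᵥ ((defJac C (θh t) * Ks * (defJac C (θh t))ᵀ) *ᵥ e t))) t := by
  refine ((he.norm_sq.const_mul (1/2)).add
    ((hθh.sub_const θ).norm_sq.const_mul (Γ/2))).congr_deriv ?_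
  rw [← dotProduct_defJac_add_dotProduct_regY C Ks θ]
  simp only [EuclideanSpace.inner_eq_star_dotProduct, star_trivial, WithLp.ofLp_sub,
    neg_dotProduct, smul_dotProduct, smul_eq_mul, dotProduct_comm (e t).ofLp,
    dotProduct_comm ((θh t).ofLp - θ.ofLp)]
  field_simp
  ring

end AdaptiveLaw

open intervalIntegral in
theorem accumulated_dissipation_bound_general
    (m k : ℕ)
    (C : Matrix (Fin m) (Fin (3*k)) ℝ)
    (Ks : Matrix (Fin (3*k)) (Fin (3*k)) ℝ)
    (Γ : ℝ) (hΓ : 0 < Γ)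
    (θ : EuclideanSpace ℝ (Fin m))
    (e θh : ℝ → EuclideanSpace ℝ (Fin m))
    (hdyn : ∀ t ≥ (0:ℝ),
      HasDerivAt e (WithLp.toLp 2 (-((defJac C θ * Ks * (defJac C (θh t))ᵀ) *ᵥ e t))) t)
    (hupd : ∀ t ≥ (0:ℝ),
      HasDerivAt θh (WithLp.toLp 2 (-(Γ⁻¹ • ((regY C Ks (e t) (θh t))ᵀ *ᵥ e t)))) t)
    (V : ℝ → ℝ)
    (hV : V = fun t => (1/2) * ‖e t‖^2 + (Γ/2) * ‖θh t - θ‖^2) :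
    ∀ T ≥ (0:ℝ),
      (∫ t in (0:ℝ)..T,
          e t ⬝ᵥ ((defJac C (θh t) * Ks * (defJac C (θh t))ᵀ) *ᵥ e t)) = V 0 - V T ∧
      (Ks.PosSemidef →
        (∫ t in (0:ℝ)..T,
            e t ⬝ᵥ ((defJac C (θh t) * Ks * (defJac C (θh t))ᵀ) *ᵥ e t)) ≤ V 0) := by
  intro T hT
  have hnonneg : ∀ t ∈ Set.uIcc 0 T, 0 ≤ t := fun t ht => (Set.uIcc_of_le hT ▸ ht).1
  have hV' : ∀ t ∈ Set.uIcc 0 T, HasDerivAt V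
      (-(e t ⬝ᵥ ((defJac C (θh t) * Ks * (defJac C (θh t))ᵀ) *ᵥ e t))) t := fun t ht =>
    hV ▸ hasDerivAt_lyapunov C Ks hΓ.ne' θ (hdyn t (hnonneg t ht)) (hupd t (hnonneg t ht))
  have hD := continuousOn_dissipation C Ks (s := Set.uIcc 0 T)
    (fun t ht => (PiLp.continuous_ofLp 2 _).continuousAt.comp_continuousWithinAt
      (hdyn t (hnonneg t ht)).continuousAt.continuousWithinAt)
    (fun t ht => (PiLp.continuous_ofLp 2 _).continuousAt.comp_continuousWithinAt
      (hupd t (hnonneg t ht)).continuousAt.continuousWithinAt)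
  have hftc := integral_eq_sub_of_hasDerivAt hV' hD.neg.intervalIntegrable
  rw [integral_neg] at hftc
  have hVT : 0 ≤ V T := by rw [hV]; positivity
  exact ⟨by linarith, fun _ => by linarith⟩

/-- the accumulated Lyapunov dissipation over `[0, T]` equals `V(0) − V(T)`,
and when `Kₛ` is positive semidefinite it is at most `V(0)`. -/
theorem accumulated_dissipation_bound
    (m k : ℕ) (hm : 0 < m) (hk : 0 < k)
    (C : Matrix (Fin m) (Fin (3*k)) ℝ)
    (Ks : Matrix (Fin (3*k)) (Fin (3*k)) ℝ) (hKs : Ksᵀ = Ks)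
    (Γ : ℝ) (hΓ : 0 < Γ)
    (θ : EuclideanSpace ℝ (Fin m))
    (e θh : ℝ → EuclideanSpace ℝ (Fin m))
    (hdyn : ∀ t ≥ (0:ℝ),
      HasDerivAt e (WithLp.toLp 2 (-((defJac C θ * Ks * (defJac C (θh t))ᵀ) *ᵥ e t))) t)
    (hupd : ∀ t ≥ (0:ℝ),
      HasDerivAt θh (WithLp.toLp 2 (-(Γ⁻¹ • ((regY C Ks (e t) (θh t))ᵀ *ᵥ e t)))) t)
    (V : ℝ → ℝ)
    (hV : V = fun t => (1/2) * ‖e t‖^2 + (Γ/2) * ‖θh t - θ‖^2) :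
    ∀ T ≥ (0:ℝ),
      (∫ t in (0:ℝ)..T,
          e t ⬝ᵥ ((defJac C (θh t) * Ks * (defJac C (θh t))ᵀ) *ᵥ e t)) = V 0 - V T ∧
      (Ks.PosSemidef →
        (∫ t in (0:ℝ)..T,
            e t ⬝ᵥ ((defJac C (θh t) * Ks * (defJac C (θh t))ᵀ) *ᵥ e t)) ≤ V 0) :=
  accumulated_dissipation_bound_general m k C Ks Γ hΓ θ e θh hdyn hupd V hV
end
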